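/- arXiv:1407.1803 — 6 statements merged into one kernel-verified Lean document; each statement's English description precedes it below -/
import Mathlib

section
/- Conformity of the Bernstein multiplier set for linear friction threshold: let q ≥ 1, let F : ℝ → ℝ be affine, and let μ = (μ_n, μ_t) with μ_n(x) = ∑_{i=0}^q a_i B_{i,q}(x) where a_i ≥ 0 for all i, and μ_t(x) = ∑_{i=0}^q b_i B_{i,q}(x) where |b_i| ≤ F(i/q) for all i. Then for every v = (v_n, v_t) ∈ L²([0,1]; ℝ²) with v_n ≤ 0 almost everywhere on [0,1], one has ∫_0^1 (μ_n(x) v_n(x) + μ_t(x) v_t(x)) dx ≤ ∫_0^1 F(x) |v_t(x)| dx. -/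
/-!
Pointwise on `[0,1]`: `μₙ ≥ 0` since Bernstein polynomials are nonnegative there, and
`|μₜ(x)| ≤ ∑ |bᵢ| Bᵢ,q(x) ≤ ∑ F(i/q) Bᵢ,q(x) = F(x)`, the last step because Bernstein sums
reproduce affine functions (`∑ Bᵢ,q = 1`, `∑ (i/q) Bᵢ,q(x) = x`). Hence
`μₙ vₙ + μₜ vₜ ≤ F |vₜ|` a.e., and this integrates since `L²([0,1]) ⊆ L¹([0,1])` and the
polynomial factors are bounded.
-/

open MeasureTheory Finset

theorem bernsteinPolynomial_eval_nonneg {R : Type*} [CommRing R] [LinearOrder R]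
    [IsStrictOrderedRing R] (q i : ℕ) {x : R} (hx : x ∈ Set.Icc 0 1) :
    0 ≤ (bernsteinPolynomial R q i).eval x := by
  have hx₁ : 0 ≤ 1 - x := sub_nonneg.mpr hx.2
  have hx₀ := hx.1
  simp only [bernsteinPolynomial, Polynomial.eval_mul, Polynomial.eval_pow,
    Polynomial.eval_natCast, Polynomial.eval_X, Polynomial.eval_sub, Polynomial.eval_one]
  positivity

noncomputable def bernsteinSum (q : ℕ) (c : ℕ → ℝ) (x : ℝ) : ℝ :=
  ∑ i ∈ range (q + 1), c i * (bernsteinPolynomial ℝ q i).eval x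

namespace bernsteinSum

variable {q : ℕ} {c : ℕ → ℝ} {x : ℝ}

theorem eq_sum_choose_mul (q : ℕ) (c : ℕ → ℝ) (x : ℝ) :
    bernsteinSum q c x = ∑ i ∈ range (q + 1), c i * q.choose i * x ^ i * (1 - x) ^ (q - i) := by
  simp only [bernsteinSum, bernsteinPolynomial, Polynomial.eval_mul, Polynomial.eval_pow,
    Polynomial.eval_natCast, Polynomial.eval_X, Polynomial.eval_sub, Polynomial.eval_one, mul_assoc]

theorem continuous (q : ℕ) (c : ℕ → ℝ) : Continuous (bernsteinSum q c) := by
  unfold bernsteinSum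
  fun_prop

theorem nonneg (hc : ∀ i ≤ q, 0 ≤ c i) (hx : x ∈ Set.Icc (0 : ℝ) 1) : 0 ≤ bernsteinSum q c x :=
  sum_nonneg fun i hi =>
    mul_nonneg (hc i (Nat.lt_succ_iff.mp (mem_range.mp hi)))
      (bernsteinPolynomial_eval_nonneg q i hx)

theorem affine_eq (hq : q ≠ 0) (F₀ F₁ x : ℝ) :
    bernsteinSum q (fun i => F₀ + F₁ * ((i : ℝ) / q)) x = F₀ + F₁ * x := by
  have h₀ := congrArg (Polynomial.eval x) (bernsteinPolynomial.sum ℝ q)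
  have h₁ := congrArg (Polynomial.eval x) (bernsteinPolynomial.sum_smul ℝ q)
  simp only [Polynomial.eval_finsetSum, nsmul_eq_mul, Polynomial.eval_mul, Polynomial.eval_natCast,
    Polynomial.eval_one, Polynomial.eval_X] at h₀ h₁
  have hq' : (q : ℝ) ≠ 0 := Nat.cast_ne_zero.2 hq
  calc bernsteinSum q (fun i => F₀ + F₁ * ((i : ℝ) / q)) x
      = F₀ * ∑ i ∈ range (q + 1), (bernsteinPolynomial ℝ q i).eval x
        + F₁ / q * ∑ i ∈ range (q + 1), i * (bernsteinPolynomial ℝ q i).eval x := by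
        simp only [bernsteinSum, mul_sum, ← sum_add_distrib]
        refine sum_congr rfl fun i _ => ?_
        ring
    _ = F₀ + F₁ * x := by
        rw [h₀, h₁]
        field_simp

theorem abs_le_affine (hq : q ≠ 0) {F₀ F₁ : ℝ} (hc : ∀ i ≤ q, |c i| ≤ F₀ + F₁ * ((i : ℝ) / q))
    (hx : x ∈ Set.Icc (0 : ℝ) 1) : |bernsteinSum q c x| ≤ F₀ + F₁ * x :=
  calc |bernsteinSum q c x|
      ≤ ∑ i ∈ range (q + 1), |c i| * (bernsteinPolynomial ℝ q i).eval x := by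
        refine (abs_sum_le_sum_abs _ _).trans_eq (sum_congr rfl fun i _ => ?_)
        rw [abs_mul, abs_of_nonneg (bernsteinPolynomial_eval_nonneg q i hx)]
    _ ≤ bernsteinSum q (fun i => F₀ + F₁ * ((i : ℝ) / q)) x :=
        sum_le_sum fun i hi => mul_le_mul_of_nonneg_right
          (hc i (Nat.lt_succ_iff.mp (mem_range.mp hi))) (bernsteinPolynomial_eval_nonneg q i hx)
    _ = F₀ + F₁ * x := affine_eq hq F₀ F₁ x

theorem mul_add_mul_le (hq : q ≠ 0) {F₀ F₁ : ℝ} {a b : ℕ → ℝ}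
    (ha : ∀ i ≤ q, 0 ≤ a i) (hb : ∀ i ≤ q, |b i| ≤ F₀ + F₁ * ((i : ℝ) / q))
    {x vn vt : ℝ} (hx : x ∈ Set.Icc (0 : ℝ) 1) (hvn : vn ≤ 0) :
    bernsteinSum q a x * vn + bernsteinSum q b x * vt ≤ (F₀ + F₁ * x) * |vt| := by
  have hn : bernsteinSum q a x * vn ≤ 0 := mul_nonpos_of_nonneg_of_nonpos (nonneg ha hx) hvn
  have ht : bernsteinSum q b x * vt ≤ (F₀ + F₁ * x) * |vt| :=
    calc bernsteinSum q b x * vt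
        ≤ |bernsteinSum q b x| * |vt| := (le_abs_self _).trans_eq (abs_mul _ _)
      _ ≤ (F₀ + F₁ * x) * |vt| := mul_le_mul_of_nonneg_right (abs_le_affine hq hb hx) (abs_nonneg _)
  linarith

end bernsteinSum

/-- Conformity of the Bernstein multiplier set for a linear friction threshold
`F x = F₀ + F₁ * x`: if `μ = (μₙ, μₜ)` has Bernstein coefficients with `aᵢ ≥ 0` and
`|bᵢ| ≤ F(i/q)`, then for every `v = (vₙ, vₜ) ∈ L²([0,1]; ℝ²)` with `vₙ ≤ 0` a.e. one has
`∫ (μₙ vₙ + μₜ vₜ) ≤ ∫ F |vₜ|`. -/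
theorem bernstein_multiplier_conforming
    (q : ℕ) (hq : 1 ≤ q) (F₀ F₁ : ℝ) (a b : ℕ → ℝ)
    (ha : ∀ i ≤ q, 0 ≤ a i)
    (hb : ∀ i ≤ q, |b i| ≤ F₀ + F₁ * ((i : ℝ) / (q : ℝ)))
    (vn vt : ℝ → ℝ)
    (hvn : MemLp vn 2 (volume.restrict (Set.Icc (0 : ℝ) 1)))
    (hvt : MemLp vt 2 (volume.restrict (Set.Icc (0 : ℝ) 1)))
    (hvn_le : ∀ᵐ x ∂(volume.restrict (Set.Icc (0 : ℝ) 1)), vn x ≤ 0) :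
    ∫ x in Set.Icc (0 : ℝ) 1,
        ((∑ i ∈ Finset.range (q + 1),
            a i * (q.choose i : ℝ) * x ^ i * (1 - x) ^ (q - i)) * vn x
          + (∑ i ∈ Finset.range (q + 1),
            b i * (q.choose i : ℝ) * x ^ i * (1 - x) ^ (q - i)) * vt x)
      ≤ ∫ x in Set.Icc (0 : ℝ) 1, (F₀ + F₁ * x) * |vt x| := by
  simp only [← bernsteinSum.eq_sum_choose_mul]
  have hvn₁ : IntegrableOn vn (Set.Icc 0 1) := hvn.integrable one_le_two
  have hvt₁ : IntegrableOn vt (Set.Icc 0 1) := hvt.integrable one_le_two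
  refine integral_mono_ae
    ((hvn₁.continuousOn_mul (bernsteinSum.continuous q a).continuousOn isCompact_Icc).add
      (hvt₁.continuousOn_mul (bernsteinSum.continuous q b).continuousOn isCompact_Icc))
    (IntegrableOn.continuousOn_mul (by fun_prop) hvt₁.abs isCompact_Icc) ?_
  filter_upwards [hvn_le, ae_restrict_mem measurableSet_Icc] with x hvnx hx
  exact bernsteinSum.mul_add_mul_le (Nat.one_le_iff_ne_zero.mp hq) ha hb hx hvnx
end

section
/- Uniqueness for the abstract stabilized mixed problem: assume the stabilized coercivity assumption holds with some α > 0. If (u₁, λ₁) ∈ V × M and (u₂, λ₂) ∈ V × M both solve the abstract stabilized mixed problem (i)–(ii), then u₁ = u₂ in V and λ₁ = λ₂ almost everywhere on Ω. -/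
/-!
Subtract the two systems and test with the differences `δu = u₁ - u₂`, `δλ = λ₁ - λ₂`: the
equations (tested with `v = δu`) and the inequalities (tested with `μ = λ₂` resp. `μ = λ₁`,
where the `g`-terms cancel) add up, by bilinearity of the pairings, to
`a(δu, δu) - ∫ γ |T δu|² + ∫ γ |δλ|² ≤ 0`. Stabilized coercivity then gives
`α ‖δu‖² + ∫ γ |δλ|² ≤ 0`, and both terms vanish since `γ > 0` a.e.
-/

open MeasureTheory

def dot (x y : ℝ × ℝ) : ℝ := x.1 * y.1 + x.2 * y.2

lemma dot_comm (x y : ℝ × ℝ) : dot x y = dot y x := by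
  simp only [dot]; ring

lemma dot_self_nonneg (x : ℝ × ℝ) : 0 ≤ dot x x :=
  add_nonneg (mul_self_nonneg x.1) (mul_self_nonneg x.2)

lemma dot_self_eq_zero {x : ℝ × ℝ} : dot x x = 0 ↔ x = 0 := by
  rw [dot, mul_self_add_mul_self_eq_zero, Prod.ext_iff]
  rfl

section Pairing

variable {Ω : Type*} [MeasurableSpace Ω] {m : Measure Ω}

/- The integrals in the problem are these pairings unfolded, so its hypotheses match the lemmas
below definitionally. Since `∫` is `0` off `L¹`, bilinearity needs the `MemLp` assumptions. -/
variable (m) in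
noncomputable def pairing (f h : Ω → ℝ × ℝ) : ℝ := ∫ ω, dot (f ω) (h ω) ∂m

variable (m) in
noncomputable def weightedPairing (w : Ω → ℝ) (f h : Ω → ℝ × ℝ) : ℝ :=
  ∫ ω, w ω * dot (f ω) (h ω) ∂m

lemma integrable_dot {f h : Ω → ℝ × ℝ} (hf : MemLp f 2 m) (hh : MemLp h 2 m) :
    Integrable (fun ω => dot (f ω) (h ω)) m :=
  (hf.fst.integrable_mul hh.fst).add (hf.snd.integrable_mul hh.snd)

lemma integrable_mul_dot {w : Ω → ℝ} {f h : Ω → ℝ × ℝ} (hw : MemLp w ⊤ m)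
    (hf : MemLp f 2 m) (hh : MemLp h 2 m) :
    Integrable (fun ω => w ω * dot (f ω) (h ω)) m :=
  (integrable_dot hf hh).smul_of_top_right hw

lemma pairing_eq_weightedPairing_one (f h : Ω → ℝ × ℝ) :
    pairing m f h = weightedPairing m 1 f h := by
  simp only [pairing, weightedPairing, Pi.one_apply, one_mul]

lemma weightedPairing_comm (w : Ω → ℝ) (f h : Ω → ℝ × ℝ) :
    weightedPairing m w f h = weightedPairing m w h f := by
  simp only [weightedPairing, dot_comm]

lemma weightedPairing_neg_left (w : Ω → ℝ) (f h : Ω → ℝ × ℝ) :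
    weightedPairing m w (-f) h = -weightedPairing m w f h := by
  rw [weightedPairing, weightedPairing, ← integral_neg]
  congr 1 with ω
  simp only [dot, Pi.neg_apply, Prod.fst_neg, Prod.snd_neg]; ring

lemma weightedPairing_add_left {w : Ω → ℝ} {f₁ f₂ h : Ω → ℝ × ℝ} (hw : MemLp w ⊤ m)
    (hf₁ : MemLp f₁ 2 m) (hf₂ : MemLp f₂ 2 m) (hh : MemLp h 2 m) :
    weightedPairing m w (f₁ + f₂) h = weightedPairing m w f₁ h + weightedPairing m w f₂ h := by
  rw [weightedPairing, weightedPairing, weightedPairing,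
    ← integral_add (integrable_mul_dot hw hf₁ hh) (integrable_mul_dot hw hf₂ hh)]
  congr 1 with ω
  simp only [dot, Pi.add_apply, Prod.fst_add, Prod.snd_add]; ring

lemma weightedPairing_sub_left {w : Ω → ℝ} {f₁ f₂ h : Ω → ℝ × ℝ} (hw : MemLp w ⊤ m)
    (hf₁ : MemLp f₁ 2 m) (hf₂ : MemLp f₂ 2 m) (hh : MemLp h 2 m) :
    weightedPairing m w (f₁ - f₂) h = weightedPairing m w f₁ h - weightedPairing m w f₂ h := by
  rw [sub_eq_add_neg, weightedPairing_add_left hw hf₁ hf₂.neg hh, weightedPairing_neg_left,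
    sub_eq_add_neg]

lemma weightedPairing_add_right {w : Ω → ℝ} {f h₁ h₂ : Ω → ℝ × ℝ} (hw : MemLp w ⊤ m)
    (hf : MemLp f 2 m) (hh₁ : MemLp h₁ 2 m) (hh₂ : MemLp h₂ 2 m) :
    weightedPairing m w f (h₁ + h₂) = weightedPairing m w f h₁ + weightedPairing m w f h₂ := by
  simp only [weightedPairing_comm _ f]
  exact weightedPairing_add_left hw hh₁ hh₂ hf

lemma weightedPairing_sub_right {w : Ω → ℝ} {f h₁ h₂ : Ω → ℝ × ℝ} (hw : MemLp w ⊤ m)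
    (hf : MemLp f 2 m) (hh₁ : MemLp h₁ 2 m) (hh₂ : MemLp h₂ 2 m) :
    weightedPairing m w f (h₁ - h₂) = weightedPairing m w f h₁ - weightedPairing m w f h₂ := by
  simp only [weightedPairing_comm _ f]
  exact weightedPairing_sub_left hw hh₁ hh₂ hf

lemma pairing_neg_left (f h : Ω → ℝ × ℝ) : pairing m (-f) h = -pairing m f h := by
  simp only [pairing_eq_weightedPairing_one, weightedPairing_neg_left]

lemma pairing_sub_left {f₁ f₂ h : Ω → ℝ × ℝ} (hf₁ : MemLp f₁ 2 m) (hf₂ : MemLp f₂ 2 m)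
    (hh : MemLp h 2 m) : pairing m (f₁ - f₂) h = pairing m f₁ h - pairing m f₂ h := by
  simp only [pairing_eq_weightedPairing_one]
  exact weightedPairing_sub_left (memLp_top_const 1) hf₁ hf₂ hh

lemma pairing_sub_right {f h₁ h₂ : Ω → ℝ × ℝ} (hf : MemLp f 2 m) (hh₁ : MemLp h₁ 2 m)
    (hh₂ : MemLp h₂ 2 m) : pairing m f (h₁ - h₂) = pairing m f h₁ - pairing m f h₂ := by
  simp only [pairing_eq_weightedPairing_one]
  exact weightedPairing_sub_right (memLp_top_const 1) hf hh₁ hh₂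

lemma weightedPairing_self (w : Ω → ℝ) (f : Ω → ℝ × ℝ) :
    weightedPairing m w f f = ∫ ω, w ω * ((f ω).1 ^ 2 + (f ω).2 ^ 2) ∂m := by
  simp only [weightedPairing, dot, sq]

lemma weightedPairing_self_nonneg {w : Ω → ℝ} (hw : 0 ≤ᵐ[m] w) (f : Ω → ℝ × ℝ) :
    0 ≤ weightedPairing m w f f :=
  integral_nonneg_of_ae <| hw.mono fun ω hω => mul_nonneg hω (dot_self_nonneg (f ω))

lemma ae_eq_zero_of_weightedPairing_self_eq_zero {w : Ω → ℝ} {f : Ω → ℝ × ℝ}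
    (hw : MemLp w ⊤ m) (hpos : ∀ᵐ ω ∂m, 0 < w ω) (hf : MemLp f 2 m)
    (h : weightedPairing m w f f = 0) : f =ᵐ[m] 0 := by
  have hnonneg : 0 ≤ᵐ[m] fun ω => w ω * dot (f ω) (f ω) :=
    hpos.mono fun ω hω => mul_nonneg hω.le (dot_self_nonneg (f ω))
  have hzero := (integral_eq_zero_iff_of_nonneg_ae hnonneg (integrable_mul_dot hw hf hf)).mp h
  filter_upwards [hzero, hpos] with ω hω hωpos
  exact dot_self_eq_zero.mp ((mul_eq_zero.mp hω).resolve_left hωpos.ne')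

section Solutions

variable {V : Type*} [AddCommGroup V] [Module ℝ V] {τ T : V →ₗ[ℝ] Ω → ℝ × ℝ}
  {a : V →ₗ[ℝ] V →ₗ[ℝ] ℝ} {L : V →ₗ[ℝ] ℝ} {γ : Ω → ℝ} {u₁ u₂ v : V} {l₁ l₂ : Ω → ℝ × ℝ}

lemma stabilizedEquation_sub (hγ : MemLp γ ⊤ m) (hl₁ : MemLp l₁ 2 m) (hl₂ : MemLp l₂ 2 m)
    (hτv : MemLp (τ v) 2 m) (hT : ∀ u, MemLp (T u) 2 m)
    (h₁ : a u₁ v + pairing m l₁ (τ v) - weightedPairing m γ (l₁ + T u₁) (T v) = L v)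
    (h₂ : a u₂ v + pairing m l₂ (τ v) - weightedPairing m γ (l₂ + T u₂) (T v) = L v) :
    a (u₁ - u₂) v + pairing m (l₁ - l₂) (τ v)
      = weightedPairing m γ (l₁ - l₂) (T v) + weightedPairing m γ (T (u₁ - u₂)) (T v) := by
  have hW := weightedPairing_sub_left hγ (hl₁.add (hT u₁)) (hl₂.add (hT u₂)) (hT v)
  rw [add_sub_add_comm, ← map_sub, weightedPairing_add_left hγ (hl₁.sub hl₂) (hT _) (hT v)] at hW
  rw [map_sub, LinearMap.sub_apply, pairing_sub_left hl₁ hl₂ hτv]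
  linarith

lemma stabilizedInequality_sub {g : Ω → ℝ} (hγ : MemLp γ ⊤ m) (hl₁ : MemLp l₁ 2 m)
    (hl₂ : MemLp l₂ 2 m) (hτ : ∀ u, MemLp (τ u) 2 m) (hT : ∀ u, MemLp (T u) 2 m)
    (h₁ : pairing m (l₂ - l₁) (τ u₁) - weightedPairing m γ (l₂ - l₁) (l₁ + T u₁)
      ≤ ∫ ω, g ω * ((l₂ ω).1 - (l₁ ω).1) ∂m)
    (h₂ : pairing m (l₁ - l₂) (τ u₂) - weightedPairing m γ (l₁ - l₂) (l₂ + T u₂)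
      ≤ ∫ ω, g ω * ((l₁ ω).1 - (l₂ ω).1) ∂m) :
    weightedPairing m γ (l₁ - l₂) (l₁ - l₂) + weightedPairing m γ (l₁ - l₂) (T (u₁ - u₂))
      ≤ pairing m (l₁ - l₂) (τ (u₁ - u₂)) := by
  have hload : ∫ ω, g ω * ((l₂ ω).1 - (l₁ ω).1) ∂m = -∫ ω, g ω * ((l₁ ω).1 - (l₂ ω).1) ∂m := by
    rw [← integral_neg]
    congr 1 with ω
    ring
  rw [← neg_sub l₁ l₂, pairing_neg_left, weightedPairing_neg_left] at h₁
  have hP := pairing_sub_right (hl₁.sub hl₂) (hτ u₁) (hτ u₂)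
  have hW := weightedPairing_sub_right hγ (hl₁.sub hl₂) (hl₁.add (hT u₁)) (hl₂.add (hT u₂))
  rw [← map_sub] at hP
  rw [add_sub_add_comm, ← map_sub,
    weightedPairing_add_right hγ (hl₁.sub hl₂) (hl₁.sub hl₂) (hT _)] at hW
  linarith

end Solutions

end Pairing

theorem stabilized_mixed_uniqueness_general
    {Ω : Type*} [MeasurableSpace Ω] (m : Measure Ω)
    (γ : Ω → ℝ) (hγ : MemLp γ ⊤ m) (hγpos : ∀ᵐ ω ∂m, 0 < γ ω)
    {V : Type*} [NormedAddCommGroup V] [InnerProductSpace ℝ V]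
    (τ T : V →ₗ[ℝ] Ω → ℝ × ℝ)
    (hτ : ∀ v : V, MemLp (τ v) 2 m) (hT : ∀ v : V, MemLp (T v) 2 m)
    (a : V →ₗ[ℝ] V →ₗ[ℝ] ℝ) (L : V →ₗ[ℝ] ℝ)
    (g : Ω → ℝ)
    (M : Set (Ω → ℝ × ℝ)) (hM : ∀ μ ∈ M, MemLp μ 2 m)
    (α : ℝ) (hα : 0 < α)
    (hcoer : ∀ v : V,
      α * ‖v‖ ^ 2 ≤ a v v - ∫ ω, γ ω * ((T v ω).1 ^ 2 + (T v ω).2 ^ 2) ∂m)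
    (u₁ u₂ : V) (l₁ l₂ : Ω → ℝ × ℝ) (hl₁ : l₁ ∈ M) (hl₂ : l₂ ∈ M)
    (h₁eq : ∀ v : V,
      a u₁ v + (∫ ω, ((l₁ ω).1 * (τ v ω).1 + (l₁ ω).2 * (τ v ω).2) ∂m)
        - (∫ ω, γ ω * (((l₁ ω).1 + (T u₁ ω).1) * (T v ω).1
            + ((l₁ ω).2 + (T u₁ ω).2) * (T v ω).2) ∂m) = L v)
    (h₁ineq : ∀ μ ∈ M,
      (∫ ω, (((μ ω).1 - (l₁ ω).1) * (τ u₁ ω).1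
          + ((μ ω).2 - (l₁ ω).2) * (τ u₁ ω).2) ∂m)
        - (∫ ω, γ ω * (((μ ω).1 - (l₁ ω).1) * ((l₁ ω).1 + (T u₁ ω).1)
            + ((μ ω).2 - (l₁ ω).2) * ((l₁ ω).2 + (T u₁ ω).2)) ∂m)
      ≤ ∫ ω, g ω * ((μ ω).1 - (l₁ ω).1) ∂m)
    (h₂eq : ∀ v : V,
      a u₂ v + (∫ ω, ((l₂ ω).1 * (τ v ω).1 + (l₂ ω).2 * (τ v ω).2) ∂m)
        - (∫ ω, γ ω * (((l₂ ω).1 + (T u₂ ω).1) * (T v ω).1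
            + ((l₂ ω).2 + (T u₂ ω).2) * (T v ω).2) ∂m) = L v)
    (h₂ineq : ∀ μ ∈ M,
      (∫ ω, (((μ ω).1 - (l₂ ω).1) * (τ u₂ ω).1
          + ((μ ω).2 - (l₂ ω).2) * (τ u₂ ω).2) ∂m)
        - (∫ ω, γ ω * (((μ ω).1 - (l₂ ω).1) * ((l₂ ω).1 + (T u₂ ω).1)
            + ((μ ω).2 - (l₂ ω).2) * ((l₂ ω).2 + (T u₂ ω).2)) ∂m)
      ≤ ∫ ω, g ω * ((μ ω).1 - (l₂ ω).1) ∂m) :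
    u₁ = u₂ ∧ l₁ =ᵐ[m] l₂ := by
  have hl₁L2 := hM l₁ hl₁
  have hl₂L2 := hM l₂ hl₂
  have heq := stabilizedEquation_sub hγ hl₁L2 hl₂L2 (hτ _) hT (h₁eq (u₁ - u₂)) (h₂eq (u₁ - u₂))
  have hineq := stabilizedInequality_sub hγ hl₁L2 hl₂L2 hτ hT (h₁ineq l₂ hl₂) (h₂ineq l₁ hl₁)
  have hcoerδ : α * ‖u₁ - u₂‖ ^ 2
      ≤ a (u₁ - u₂) (u₁ - u₂) - weightedPairing m γ (T (u₁ - u₂)) (T (u₁ - u₂)) := by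
    rw [weightedPairing_self]
    exact hcoer _
  have hδl := weightedPairing_self_nonneg (hγpos.mono fun _ h => h.le) (l₁ - l₂)
  have hu : α * ‖u₁ - u₂‖ ^ 2 = 0 := le_antisymm (by linarith) (by positivity)
  refine ⟨?_, ?_⟩
  · simpa [hα.ne', sub_eq_zero] using hu
  · exact Filter.eventuallyEq_iff_sub.mpr
      (ae_eq_zero_of_weightedPairing_self_eq_zero hγ hγpos (hl₁L2.sub hl₂L2) (by linarith))

/-- Uniqueness for the abstract stabilized mixed problem: under the stabilized coercivity
assumption, two solutions `(u₁, l₁)` and `(u₂, l₂)` of the abstract stabilized mixed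
problem (i)–(ii) coincide: `u₁ = u₂` in `V` and `l₁ = l₂` almost everywhere on `Ω`. -/
theorem stabilized_mixed_uniqueness
    {Ω : Type*} [MeasurableSpace Ω] (m : Measure Ω)
    (γ : Ω → ℝ) (hγ : MemLp γ ⊤ m) (hγpos : ∀ᵐ ω ∂m, 0 < γ ω)
    {V : Type*} [NormedAddCommGroup V] [InnerProductSpace ℝ V]
    (τ T : V →ₗ[ℝ] Ω → ℝ × ℝ)
    (hτ : ∀ v : V, MemLp (τ v) 2 m) (hT : ∀ v : V, MemLp (T v) 2 m)
    (a : V →ₗ[ℝ] V →ₗ[ℝ] ℝ) (L : V →ₗ[ℝ] ℝ)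
    (g : Ω → ℝ) (hg : MemLp g 2 m)
    (M : Set (Ω → ℝ × ℝ)) (hM : ∀ μ ∈ M, MemLp μ 2 m)
    (α : ℝ) (hα : 0 < α)
    (hcoer : ∀ v : V,
      α * ‖v‖ ^ 2 ≤ a v v - ∫ ω, γ ω * ((T v ω).1 ^ 2 + (T v ω).2 ^ 2) ∂m)
    (u₁ u₂ : V) (l₁ l₂ : Ω → ℝ × ℝ) (hl₁ : l₁ ∈ M) (hl₂ : l₂ ∈ M)
    (h₁eq : ∀ v : V,
      a u₁ v + (∫ ω, ((l₁ ω).1 * (τ v ω).1 + (l₁ ω).2 * (τ v ω).2) ∂m)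
        - (∫ ω, γ ω * (((l₁ ω).1 + (T u₁ ω).1) * (T v ω).1
            + ((l₁ ω).2 + (T u₁ ω).2) * (T v ω).2) ∂m) = L v)
    (h₁ineq : ∀ μ ∈ M,
      (∫ ω, (((μ ω).1 - (l₁ ω).1) * (τ u₁ ω).1
          + ((μ ω).2 - (l₁ ω).2) * (τ u₁ ω).2) ∂m)
        - (∫ ω, γ ω * (((μ ω).1 - (l₁ ω).1) * ((l₁ ω).1 + (T u₁ ω).1)
            + ((μ ω).2 - (l₁ ω).2) * ((l₁ ω).2 + (T u₁ ω).2)) ∂m)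
      ≤ ∫ ω, g ω * ((μ ω).1 - (l₁ ω).1) ∂m)
    (h₂eq : ∀ v : V,
      a u₂ v + (∫ ω, ((l₂ ω).1 * (τ v ω).1 + (l₂ ω).2 * (τ v ω).2) ∂m)
        - (∫ ω, γ ω * (((l₂ ω).1 + (T u₂ ω).1) * (T v ω).1
            + ((l₂ ω).2 + (T u₂ ω).2) * (T v ω).2) ∂m) = L v)
    (h₂ineq : ∀ μ ∈ M,
      (∫ ω, (((μ ω).1 - (l₂ ω).1) * (τ u₂ ω).1
          + ((μ ω).2 - (l₂ ω).2) * (τ u₂ ω).2) ∂m)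
        - (∫ ω, γ ω * (((μ ω).1 - (l₂ ω).1) * ((l₂ ω).1 + (T u₂ ω).1)
            + ((μ ω).2 - (l₂ ω).2) * ((l₂ ω).2 + (T u₂ ω).2)) ∂m)
      ≤ ∫ ω, g ω * ((μ ω).1 - (l₂ ω).1) ∂m) :
    u₁ = u₂ ∧ l₁ =ᵐ[m] l₂ :=
  stabilized_mixed_uniqueness_general m γ hγ hγpos τ T hτ hT a L g M hM α hα hcoer u₁ u₂ l₁ l₂ hl₁
    hl₂ h₁eq h₁ineq h₂eq h₂ineq
end

section
/- Stability corollary for nonnegative multiplier and gap: under the hypotheses of the abstract stability estimate (stabilized coercivity with α > 0; (u, λ) solves (i)–(ii); (0, λ_t), (2λ_n, λ_t), (λ_n, 0) ∈ M; |L(v)| ≤ C₀ ‖v‖_V for all v), if in addition λ_n ≥ 0 almost everywhere and g ≥ 0 almost everywhere on Ω, then α ‖u‖_V² + ∫_Ω γ |λ|² dm ≤ C₀ ‖u‖_V. -/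
/-!
Testing the variational inequality (ii) with `μ = (0, λₜ)` and with `μ = (λₙ, 0)` and adding
gives `∫ g λₙ + ∫ γ ⟨λ, λ + Tu⟩ ≤ ∫ ⟨λ, τu⟩`. Inserting this into (i) at `v = u`, the mixed terms
`γ ⟨λ, Tu⟩` cancel and leave `a(u, u) - ∫ γ |Tu|² + ∫ γ |λ|² + ∫ g λₙ ≤ L(u)`; stabilized
coercivity and `g λₙ ≥ 0` give the estimate.
-/

open MeasureTheory

section

variable {Ω : Type*} [MeasurableSpace Ω] {m : Measure Ω}

theorem integral_fst_mul_add_snd_mul {f h : Ω → ℝ × ℝ} (hf : MemLp f 2 m) (hh : MemLp h 2 m) :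
    ∫ ω, ((f ω).1 * (h ω).1 + (f ω).2 * (h ω).2) ∂m
      = (∫ ω, (f ω).1 * (h ω).1 ∂m) + ∫ ω, (f ω).2 * (h ω).2 ∂m :=
  integral_add (hf.fst.integrable_mul hh.fst) (hf.snd.integrable_mul hh.snd)

theorem integral_weight_mul_cross_terms_cancel {γ a b c d : Ω → ℝ} (hγ : MemLp γ ⊤ m)
    (ha : MemLp a 2 m) (hb : MemLp b 2 m) (hc : MemLp c 2 m) (hd : MemLp d 2 m) :
    (∫ ω, γ ω * (a ω * (a ω + c ω)) ∂m) + (∫ ω, γ ω * (b ω * (b ω + d ω)) ∂m)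
        - ∫ ω, γ ω * ((a ω + c ω) * c ω + (b ω + d ω) * d ω) ∂m
      = (∫ ω, γ ω * (a ω ^ 2 + b ω ^ 2) ∂m) - ∫ ω, γ ω * (c ω ^ 2 + d ω ^ 2) ∂m := by
  have weighted {F : Ω → ℝ} (hF : Integrable F m) : Integrable (fun ω => γ ω * F ω) m :=
    hF.mul_of_top_right hγ
  have hac : Integrable (fun ω => γ ω * (a ω * (a ω + c ω))) m :=
    weighted (ha.integrable_mul (ha.add hc))
  have hbd : Integrable (fun ω => γ ω * (b ω * (b ω + d ω))) m :=
    weighted (hb.integrable_mul (hb.add hd))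
  have hcross : Integrable (fun ω => γ ω * ((a ω + c ω) * c ω + (b ω + d ω) * d ω)) m :=
    weighted (((ha.add hc).integrable_mul hc).add ((hb.add hd).integrable_mul hd))
  have hab : Integrable (fun ω => γ ω * (a ω ^ 2 + b ω ^ 2)) m :=
    weighted (ha.integrable_sq.add hb.integrable_sq)
  have hcd : Integrable (fun ω => γ ω * (c ω ^ 2 + d ω ^ 2)) m :=
    weighted (hc.integrable_sq.add hd.integrable_sq)
  rw [← integral_add hac hbd, ← integral_sub (by exact hac.add hbd) hcross, ← integral_sub hab hcd]
  exact integral_congr_ae (Filter.Eventually.of_forall fun ω => by ring)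

/-- The variational inequality (ii) for the multiplier `l`, with `τu = τ u` and `w = T u`. -/
def StabilizedVariationalInequality (m : Measure Ω) (γ g : Ω → ℝ) (M : Set (Ω → ℝ × ℝ))
    (l τu w : Ω → ℝ × ℝ) : Prop :=
  ∀ μ ∈ M,
    (∫ ω, (((μ ω).1 - (l ω).1) * (τu ω).1 + ((μ ω).2 - (l ω).2) * (τu ω).2) ∂m)
        - (∫ ω, γ ω * (((μ ω).1 - (l ω).1) * ((l ω).1 + (w ω).1)
            + ((μ ω).2 - (l ω).2) * ((l ω).2 + (w ω).2)) ∂m)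
      ≤ ∫ ω, g ω * ((μ ω).1 - (l ω).1) ∂m

namespace StabilizedVariationalInequality

variable {γ g : Ω → ℝ} {M : Set (Ω → ℝ × ℝ)} {l τu w : Ω → ℝ × ℝ}

theorem integral_normal_le (h : StabilizedVariationalInequality m γ g M l τu w)
    (hμ : (fun ω => ((0 : ℝ), (l ω).2)) ∈ M) :
    (∫ ω, g ω * (l ω).1 ∂m)
      ≤ (∫ ω, (l ω).1 * (τu ω).1 ∂m) - ∫ ω, γ ω * ((l ω).1 * ((l ω).1 + (w ω).1)) ∂m := by
  have htest := h _ hμ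
  simp only [zero_sub, sub_self, zero_mul, add_zero, neg_mul, mul_neg, integral_neg] at htest
  linarith

theorem integral_tangential_nonneg (h : StabilizedVariationalInequality m γ g M l τu w)
    (hμ : (fun ω => ((l ω).1, (0 : ℝ))) ∈ M) :
    0 ≤ (∫ ω, (l ω).2 * (τu ω).2 ∂m) - ∫ ω, γ ω * ((l ω).2 * ((l ω).2 + (w ω).2)) ∂m := by
  have htest := h _ hμ
  simp only [zero_sub, sub_self, zero_mul, zero_add, mul_zero, neg_mul, mul_neg, integral_neg,
    integral_zero] at htest
  linarith

end StabilizedVariationalInequality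

end

theorem stabilized_mixed_stability_nonneg_general
    {Ω : Type*} [MeasurableSpace Ω] (m : Measure Ω)
    (γ : Ω → ℝ) (hγ : MemLp γ ⊤ m)
    {V : Type*} [NormedAddCommGroup V] [InnerProductSpace ℝ V]
    (τ T : V →ₗ[ℝ] Ω → ℝ × ℝ)
    (hτ : ∀ v : V, MemLp (τ v) 2 m) (hT : ∀ v : V, MemLp (T v) 2 m)
    (a : V →ₗ[ℝ] V →ₗ[ℝ] ℝ) (L : V →ₗ[ℝ] ℝ)
    (g : Ω → ℝ)
    (M : Set (Ω → ℝ × ℝ)) (hM : ∀ μ ∈ M, MemLp μ 2 m)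
    (α : ℝ)
    (hcoer : ∀ v : V,
      α * ‖v‖ ^ 2 ≤ a v v - ∫ ω, γ ω * ((T v ω).1 ^ 2 + (T v ω).2 ^ 2) ∂m)
    (u : V) (l : Ω → ℝ × ℝ) (hl : l ∈ M)
    (heq : ∀ v : V,
      a u v + (∫ ω, ((l ω).1 * (τ v ω).1 + (l ω).2 * (τ v ω).2) ∂m)
        - (∫ ω, γ ω * (((l ω).1 + (T u ω).1) * (T v ω).1
            + ((l ω).2 + (T u ω).2) * (T v ω).2) ∂m) = L v)
    (hineq : ∀ μ ∈ M,
      (∫ ω, (((μ ω).1 - (l ω).1) * (τ u ω).1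
          + ((μ ω).2 - (l ω).2) * (τ u ω).2) ∂m)
        - (∫ ω, γ ω * (((μ ω).1 - (l ω).1) * ((l ω).1 + (T u ω).1)
            + ((μ ω).2 - (l ω).2) * ((l ω).2 + (T u ω).2)) ∂m)
      ≤ ∫ ω, g ω * ((μ ω).1 - (l ω).1) ∂m)
    (hmod₁ : (fun ω => ((0 : ℝ), (l ω).2)) ∈ M)
    (hmod₃ : (fun ω => ((l ω).1, (0 : ℝ))) ∈ M)
    (C₀ : ℝ) (hL : ∀ v : V, |L v| ≤ C₀ * ‖v‖)
    (hlpos : ∀ᵐ ω ∂m, 0 ≤ (l ω).1) (hgpos : ∀ᵐ ω ∂m, 0 ≤ g ω) :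
    α * ‖u‖ ^ 2 + (∫ ω, γ ω * ((l ω).1 ^ 2 + (l ω).2 ^ 2) ∂m)
      ≤ C₀ * ‖u‖ := by
  have hvi : StabilizedVariationalInequality m γ g M l (τ u) (T u) := hineq
  have hl₂ := hM l hl
  have hnormal := hvi.integral_normal_le hmod₁
  have htangential := hvi.integral_tangential_nonneg hmod₃
  have hgap : 0 ≤ ∫ ω, g ω * (l ω).1 ∂m :=
    integral_nonneg_of_ae (by filter_upwards [hlpos, hgpos] with ω hlω hgω using mul_nonneg hgω hlω)
  have hpairing := integral_fst_mul_add_snd_mul hl₂ (hτ u)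
  have henergy := integral_weight_mul_cross_terms_cancel hγ hl₂.fst hl₂.snd (hT u).fst (hT u).snd
  linarith [heq u, hcoer u, le_abs_self (L u), hL u]

/-- Stability corollary for nonnegative multiplier and gap: under the hypotheses of the
abstract stability estimate, if additionally `λₙ ≥ 0` a.e. and `g ≥ 0` a.e. on `Ω`, then
`α ‖u‖² + ∫ γ |λ|² dm ≤ C₀ ‖u‖`. -/
theorem stabilized_mixed_stability_nonneg
    {Ω : Type*} [MeasurableSpace Ω] (m : Measure Ω)
    (γ : Ω → ℝ) (hγ : MemLp γ ⊤ m) (hγpos : ∀ᵐ ω ∂m, 0 < γ ω)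
    {V : Type*} [NormedAddCommGroup V] [InnerProductSpace ℝ V]
    (τ T : V →ₗ[ℝ] Ω → ℝ × ℝ)
    (hτ : ∀ v : V, MemLp (τ v) 2 m) (hT : ∀ v : V, MemLp (T v) 2 m)
    (a : V →ₗ[ℝ] V →ₗ[ℝ] ℝ) (L : V →ₗ[ℝ] ℝ)
    (g : Ω → ℝ) (hg : MemLp g 2 m)
    (M : Set (Ω → ℝ × ℝ)) (hM : ∀ μ ∈ M, MemLp μ 2 m)
    (α : ℝ) (hα : 0 < α)
    (hcoer : ∀ v : V,
      α * ‖v‖ ^ 2 ≤ a v v - ∫ ω, γ ω * ((T v ω).1 ^ 2 + (T v ω).2 ^ 2) ∂m)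
    (u : V) (l : Ω → ℝ × ℝ) (hl : l ∈ M)
    (heq : ∀ v : V,
      a u v + (∫ ω, ((l ω).1 * (τ v ω).1 + (l ω).2 * (τ v ω).2) ∂m)
        - (∫ ω, γ ω * (((l ω).1 + (T u ω).1) * (T v ω).1
            + ((l ω).2 + (T u ω).2) * (T v ω).2) ∂m) = L v)
    (hineq : ∀ μ ∈ M,
      (∫ ω, (((μ ω).1 - (l ω).1) * (τ u ω).1
          + ((μ ω).2 - (l ω).2) * (τ u ω).2) ∂m)
        - (∫ ω, γ ω * (((μ ω).1 - (l ω).1) * ((l ω).1 + (T u ω).1)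
            + ((μ ω).2 - (l ω).2) * ((l ω).2 + (T u ω).2)) ∂m)
      ≤ ∫ ω, g ω * ((μ ω).1 - (l ω).1) ∂m)
    (hmod₁ : (fun ω => ((0 : ℝ), (l ω).2)) ∈ M)
    (hmod₂ : (fun ω => (2 * (l ω).1, (l ω).2)) ∈ M)
    (hmod₃ : (fun ω => ((l ω).1, (0 : ℝ))) ∈ M)
    (C₀ : ℝ) (hC₀ : 0 ≤ C₀) (hL : ∀ v : V, |L v| ≤ C₀ * ‖v‖)
    (hlpos : ∀ᵐ ω ∂m, 0 ≤ (l ω).1) (hgpos : ∀ᵐ ω ∂m, 0 ≤ g ω) :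
    α * ‖u‖ ^ 2 + (∫ ω, γ ω * ((l ω).1 ^ 2 + (l ω).2 ^ 2) ∂m)
      ≤ C₀ * ‖u‖ :=
  stabilized_mixed_stability_nonneg_general m γ hγ τ T hτ hT a L g M hM α hcoer u l hl heq hineq
    hmod₁ hmod₃ C₀ hL hlpos hgpos
end

section
/- A posteriori estimate for the normal contact terms: let (Ω, m) be a measure space and λ_n, λ_n^h, u_n, u_n^h, g ∈ L²(Ω, m) real-valued. Assume λ_n ≥ 0 a.e., u_n ≤ g a.e., and ∫_Ω λ_n (u_n − g) dm = 0. Then ∫_Ω (λ_n − λ_n^h)(u_n^h − u_n) dm ≤ ∫_Ω (λ_n^h)⁺ (g − u_n^h)⁺ dm + ∫_Ω (λ_n^h − λ_n)(g − u_n^h)⁻ dm − ∫_Ω (λ_n^h)⁻ (u_n^h − u_n) dm, where v⁺ = max{v, 0} and v⁻ = min{v, 0}, so that v = v⁺ + v⁻. -/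
/-!
Write `λₕ = λₕ⁺ + λₕ⁻` and `g − uₕ = (g − uₕ)⁺ + (g − uₕ)⁻`. Pointwise, the right-hand side minus
the left-hand side equals
`λ (g − uₕ)⁺ + λₕ⁻ (g − uₕ)⁻ + λₕ⁺ (g − u) − λ (g − u)`,
whose first three terms are nonnegative by the sign conditions and whose last term integrates to
zero by complementarity.
-/

open MeasureTheory

theorem MeasureTheory.MemLp.min_zero {α : Type*} [MeasurableSpace α] {μ : Measure α}
    {p : ENNReal} {f : α → ℝ} (hf : MemLp f p μ) : MemLp (fun x => min (f x) 0) p μ :=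
  hf.inf MemLp.zero

theorem normal_contact_integrand_le {l lh u uh G : ℝ} (hl : 0 ≤ l) (hu : u ≤ G) :
    (l - lh) * (uh - u) + l * (u - G)
      ≤ max lh 0 * max (G - uh) 0 + (lh - l) * min (G - uh) 0 - min lh 0 * (uh - u) := by
  have hlh := max_add_min lh 0
  have hG := max_add_min (G - uh) 0
  have hsum : 0 ≤ l * max (G - uh) 0 + min lh 0 * min (G - uh) 0 + max lh 0 * (G - u) := by
    have h₁ := mul_nonneg hl (le_max_right (G - uh) 0)
    have h₂ := mul_nonneg_of_nonpos_of_nonpos (min_le_right lh 0) (min_le_right (G - uh) 0)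
    have h₃ := mul_nonneg (le_max_right lh 0) (sub_nonneg.2 hu)
    linarith
  linear_combination hsum + (min (G - uh) 0 + uh - u) * hlh + (l - max lh 0) * hG

/-- A posteriori estimate for the normal contact terms: if `λₙ ≥ 0` a.e., `uₙ ≤ g` a.e. and
`∫ λₙ (uₙ − g) dm = 0`, then
`∫ (λₙ − λₙʰ)(uₙʰ − uₙ) ≤ ∫ (λₙʰ)⁺ (g − uₙʰ)⁺ + ∫ (λₙʰ − λₙ)(g − uₙʰ)⁻ − ∫ (λₙʰ)⁻ (uₙʰ − uₙ)`,
where `v⁺ = max v 0` and `v⁻ = min v 0`. -/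
theorem aposteriori_normal_contact
    {Ω : Type*} [MeasurableSpace Ω] (m : Measure Ω)
    (ln lnh un unh g : Ω → ℝ)
    (hln : MemLp ln 2 m) (hlnh : MemLp lnh 2 m) (hun : MemLp un 2 m)
    (hunh : MemLp unh 2 m) (hg : MemLp g 2 m)
    (hln_nonneg : ∀ᵐ ω ∂m, 0 ≤ ln ω)
    (hun_le : ∀ᵐ ω ∂m, un ω ≤ g ω)
    (hcompl : ∫ ω, ln ω * (un ω - g ω) ∂m = 0) :
    ∫ ω, (ln ω - lnh ω) * (unh ω - un ω) ∂m
      ≤ (∫ ω, max (lnh ω) 0 * max (g ω - unh ω) 0 ∂m)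
        + (∫ ω, (lnh ω - ln ω) * min (g ω - unh ω) 0 ∂m)
        - (∫ ω, min (lnh ω) 0 * (unh ω - un ω) ∂m) := by
  have hgap := hg.sub hunh
  have iL : Integrable (fun ω => (ln ω - lnh ω) * (unh ω - un ω)) m :=
    (hln.sub hlnh).integrable_mul (hunh.sub hun)
  have iC : Integrable (fun ω => ln ω * (un ω - g ω)) m := hln.integrable_mul (hun.sub hg)
  have i₁ : Integrable (fun ω => max (lnh ω) 0 * max (g ω - unh ω) 0) m :=
    hlnh.pos_part.integrable_mul hgap.pos_part
  have i₂ : Integrable (fun ω => (lnh ω - ln ω) * min (g ω - unh ω) 0) m :=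
    (hlnh.sub hln).integrable_mul hgap.min_zero
  have i₃ : Integrable (fun ω => min (lnh ω) 0 * (unh ω - un ω)) m :=
    hlnh.min_zero.integrable_mul (hunh.sub hun)
  have hmono := integral_mono_ae (iL.add iC) ((i₁.add i₂).sub i₃) <| by
    filter_upwards [hln_nonneg, hun_le] with ω hl hu
    exact normal_contact_integrand_le hl hu
  simp only [Pi.add_apply, Pi.sub_apply] at hmono
  rw [integral_add iL iC, integral_sub (by exact i₁.add i₂) i₃, integral_add i₁ i₂, hcompl] at hmono
  linarith
end

section
/- A posteriori estimate for the tangential (friction) terms: let (Ω, m) be a measure space and λ_t, λ_t^h, u_t, u_t^h, F ∈ L²(Ω, m) real-valued. Assume |λ_t| ≤ F a.e. and ∫_Ω λ_t u_t dm = ∫_Ω F |u_t| dm. Then ∫_Ω (λ_t − λ_t^h)(u_t^h − u_t) dm ≤ ∫_Ω (|λ_t^h| − F)⁺ |u_t − u_t^h| dm − ∫_Ω (|λ_t^h| − F)⁻ |u_t^h| dm − ∫_Ω λ_t^h u_t^h dm + ∫_Ω |λ_t^h| |u_t^h| dm, where v⁺ = max{v, 0} and v⁻ = min{v, 0}, so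 that v = v⁺ + v⁻. -/
/-!
Pointwise, `λₜ uₜʰ ≤ F |uₜʰ|` and `λₜʰ uₜ ≤ |λₜʰ| |uₜ|`; together with the splitting
`|λₜʰ| = (|λₜʰ| − F)⁺ + (|λₜʰ| − F)⁻ + F` and `|uₜ| ≤ |uₜ − uₜʰ| + |uₜʰ|` this bounds the integrand
`(λₜ − λₜʰ)(uₜʰ − uₜ) + (λₜ uₜ − F |uₜ|)` by the integrand of the right-hand side. The added term
integrates to zero by the complementarity condition.
-/

open MeasureTheory

lemma tangential_friction_pointwise_le {a b u v f : ℝ} (ha : |a| ≤ f) :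
    (a - b) * (v - u) + (a * u - f * |u|)
      ≤ max (|b| - f) 0 * |u - v| - min (|b| - f) 0 * |v| - b * v + |b| * |v| := by
  have hav : a * v ≤ f * |v| :=
    (le_abs_self _).trans (abs_mul a v ▸ mul_le_mul_of_nonneg_right ha (abs_nonneg v))
  have hbu : b * u ≤ |b| * |u| := (le_abs_self _).trans (abs_mul b u).le
  have htri : |u| ≤ |u - v| + |v| := sub_le_iff_le_add.mp (abs_sub_abs_le_abs_sub u v)
  have hsplit : min (|b| - f) 0 + max (|b| - f) 0 = |b| - f :=
    (min_add_max _ _).trans (add_zero _)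
  calc (a - b) * (v - u) + (a * u - f * |u|)
      = a * v + b * u - f * |u| - b * v := by ring
    _ ≤ (|b| - f) * |u| + f * |v| - b * v := by linarith
    _ ≤ max (|b| - f) 0 * |u| + f * |v| - b * v := by gcongr; exact le_max_left _ _
    _ ≤ max (|b| - f) 0 * (|u - v| + |v|) + f * |v| - b * v := by gcongr
    _ = max (|b| - f) 0 * |u - v| - min (|b| - f) 0 * |v| - b * v + |b| * |v| := by
      linear_combination |v| * hsplit

/-- A posteriori estimate for the tangential (friction) terms: if `|λₜ| ≤ F` a.e. and
`∫ λₜ uₜ dm = ∫ F |uₜ| dm`, then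
`∫ (λₜ − λₜʰ)(uₜʰ − uₜ) ≤ ∫ (|λₜʰ| − F)⁺ |uₜ − uₜʰ| − ∫ (|λₜʰ| − F)⁻ |uₜʰ| − ∫ λₜʰ uₜʰ + ∫ |λₜʰ| |uₜʰ|`,
where `v⁺ = max v 0` and `v⁻ = min v 0`. -/
theorem aposteriori_tangential_friction
    {Ω : Type*} [MeasurableSpace Ω] (m : Measure Ω)
    (lt lth ut uth F : Ω → ℝ)
    (hlt : MemLp lt 2 m) (hlth : MemLp lth 2 m) (hut : MemLp ut 2 m)
    (huth : MemLp uth 2 m) (hF : MemLp F 2 m)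
    (hlt_le : ∀ᵐ ω ∂m, |lt ω| ≤ F ω)
    (hcompl : ∫ ω, lt ω * ut ω ∂m = ∫ ω, F ω * |ut ω| ∂m) :
    ∫ ω, (lt ω - lth ω) * (uth ω - ut ω) ∂m
      ≤ (∫ ω, max (|lth ω| - F ω) 0 * |ut ω - uth ω| ∂m)
        - (∫ ω, min (|lth ω| - F ω) 0 * |uth ω| ∂m)
        - (∫ ω, lth ω * uth ω ∂m)
        + (∫ ω, |lth ω| * |uth ω| ∂m) := by
  have hgap : MemLp (fun ω => |lth ω| - F ω) 2 m := hlth.abs.sub hF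
  have i_err : Integrable (fun ω => (lt ω - lth ω) * (uth ω - ut ω)) m :=
    (hlt.sub hlth).integrable_mul (huth.sub hut)
  have i_lu : Integrable (fun ω => lt ω * ut ω) m := hlt.integrable_mul hut
  have i_Fu : Integrable (fun ω => F ω * |ut ω|) m := hF.integrable_mul hut.abs
  have i_pos : Integrable (fun ω => max (|lth ω| - F ω) 0 * |ut ω - uth ω|) m :=
    hgap.pos_part.integrable_mul (hut.sub huth).abs
  have i_neg : Integrable (fun ω => min (|lth ω| - F ω) 0 * |uth ω|) m :=
    (hgap.inf MemLp.zero).integrable_mul huth.abs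
  have i_luh : Integrable (fun ω => lth ω * uth ω) m := hlth.integrable_mul huth
  have i_abs : Integrable (fun ω => |lth ω| * |uth ω|) m := hlth.abs.integrable_mul huth.abs
  calc ∫ ω, (lt ω - lth ω) * (uth ω - ut ω) ∂m
      = ∫ ω, (lt ω - lth ω) * (uth ω - ut ω) + (lt ω * ut ω - F ω * |ut ω|) ∂m := by
        rw [integral_add i_err ?_, integral_sub i_lu i_Fu, hcompl, sub_self, add_zero]
        exact i_lu.sub i_Fu
    _ ≤ ∫ ω, max (|lth ω| - F ω) 0 * |ut ω - uth ω| - min (|lth ω| - F ω) 0 * |uth ω|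
          - lth ω * uth ω + |lth ω| * |uth ω| ∂m :=
        integral_mono_ae (i_err.add (i_lu.sub i_Fu)) (((i_pos.sub i_neg).sub i_luh).add i_abs)
          (hlt_le.mono fun ω hω => tangential_friction_pointwise_le hω)
    _ = _ := by
        rw [integral_add ?_ i_abs, integral_sub ?_ i_luh, integral_sub i_pos i_neg]
        exacts [i_pos.sub i_neg, (i_pos.sub i_neg).sub i_luh]
end

section
/- Every solution of the mixed formulation solves the variational inequality (L² multiplier version of part 2 of the paper's equivalence theorem): in the mixed/variational-inequality setting below, with (Ω, m) σ-finite, suppose (u, λ) ∈ V × M_pt satisfies a(u, v) + ∫_Ω ⟨λ, τv⟩ dm = L(v) for all v ∈ V, and ∫_Ω ⟨μ − λ, τu⟩ dm ≤ ∫_Ω g (μ_n − λ_n) dm for all μ ∈ M_pt. Then u ∈ K and a(u, v − u) + j(v) − j(u) ≥ L(v − u) for all v ∈ K. -/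
/-!
The multiplier set is a product of a normal cone `{μₙ ≥ 0}` and a tangential box
`{|μₜ| ≤ F}`, so the multiplier inequality splits into a normal and a tangential one.
Testing the normal one with `λₙ + ((τu)ₙ - g)⁺` and with `0` gives `(τu)ₙ ≤ g` and the
complementarity `∫ λₙ (τu)ₙ = ∫ λₙ g`; testing the tangential one with `F · sign (τu)ₜ`
gives `∫ λₜ (τu)ₜ = j(u)`. Subtracting the mixed equation at `u` from the one at `v ∈ K`
and bounding `∫ λₙ (τv)ₙ ≤ ∫ λₙ g` and `∫ λₜ (τv)ₜ ≤ j(v)` yields the variational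
inequality.
-/

open MeasureTheory

lemma measurable_coe_sign_real : Measurable (fun x : ℝ => (SignType.sign x : ℝ)) :=
  have monotone_coe : Monotone (fun s : SignType => (s : ℝ)) := fun s t h => by
    cases s <;> cases t <;> simp_all
  (monotone_coe.comp SignType.sign.monotone).measurable

lemma abs_coe_sign_le_one (x : ℝ) : |(SignType.sign x : ℝ)| ≤ 1 := by
  rcases lt_trichotomy x 0 with h | h | h <;> simp [h]

section

variable {Ω : Type*} [MeasurableSpace Ω] {m : Measure Ω}

lemma integrable_mul_of_memLp_two {f g : Ω → ℝ} (hf : MemLp f 2 m) (hg : MemLp g 2 m) :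
    Integrable (fun ω => f ω * g ω) m :=
  hf.integrable_mul hg

lemma integral_mul_le_integral_mul_of_nonneg {l f g : Ω → ℝ} (hl : MemLp l 2 m)
    (hf : MemLp f 2 m) (hg : MemLp g 2 m) (hl0 : ∀ᵐ ω ∂m, 0 ≤ l ω)
    (hfg : ∀ᵐ ω ∂m, f ω ≤ g ω) :
    ∫ ω, l ω * f ω ∂m ≤ ∫ ω, l ω * g ω ∂m :=
  integral_mono_ae (integrable_mul_of_memLp_two hl hf) (integrable_mul_of_memLp_two hl hg) <| by
    filter_upwards [hl0, hfg] with ω h0 h using mul_le_mul_of_nonneg_left h h0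

lemma integral_mul_le_integral_mul_abs {l f F : Ω → ℝ} (hl : MemLp l 2 m)
    (hf : MemLp f 2 m) (hF : MemLp F 2 m) (hlF : ∀ᵐ ω ∂m, |l ω| ≤ F ω) :
    ∫ ω, l ω * f ω ∂m ≤ ∫ ω, F ω * |f ω| ∂m :=
  integral_mono_ae (integrable_mul_of_memLp_two hl hf)
    (integrable_mul_of_memLp_two hF hf.abs) <| by
    filter_upwards [hlF] with ω h
    calc l ω * f ω ≤ |l ω| * |f ω| := (le_abs_self _).trans_eq (abs_mul _ _)
      _ ≤ F ω * |f ω| := mul_le_mul_of_nonneg_right h (abs_nonneg _)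

lemma ae_le_of_forall_integral_mul_le {f g : Ω → ℝ} (hf : MemLp f 2 m) (hg : MemLp g 2 m)
    (h : ∀ ψ : Ω → ℝ, MemLp ψ 2 m → (∀ᵐ ω ∂m, 0 ≤ ψ ω) →
      ∫ ω, ψ ω * f ω ∂m ≤ ∫ ω, ψ ω * g ω ∂m) :
    ∀ᵐ ω ∂m, f ω ≤ g ω := by
  set ψ : Ω → ℝ := fun ω => max (f ω - g ω) 0
  have hψ : MemLp ψ 2 m := (hf.sub hg).pos_part
  have hnonneg : ∀ ω, 0 ≤ ψ ω * (f ω - g ω) := fun ω => by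
    rcases le_total (f ω - g ω) 0 with hω | hω <;> simp [ψ, hω, mul_self_nonneg]
  have hint : ∫ ω, ψ ω * (f ω - g ω) ∂m = 0 := by
    refine le_antisymm ?_ (integral_nonneg hnonneg)
    simp_rw [mul_sub]
    rw [integral_sub (integrable_mul_of_memLp_two hψ hf) (integrable_mul_of_memLp_two hψ hg)]
    exact sub_nonpos.2 (h ψ hψ (ae_of_all _ fun _ => le_max_right _ _))
  filter_upwards [(integral_eq_zero_iff_of_nonneg hnonneg
    (integrable_mul_of_memLp_two hψ (hf.sub hg))).1 hint] with ω hω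
  by_contra hlt
  have hpos : 0 < f ω - g ω := sub_pos.2 (not_le.1 hlt)
  have : ψ ω * (f ω - g ω) = (f ω - g ω) * (f ω - g ω) := by simp [ψ, hpos.le]
  exact (mul_pos hpos hpos).ne' (this.symm.trans hω)

lemma ae_le_and_integral_mul_eq_of_forall_nonneg {l f g : Ω → ℝ} (hl : MemLp l 2 m)
    (hf : MemLp f 2 m) (hg : MemLp g 2 m) (hl0 : ∀ᵐ ω ∂m, 0 ≤ l ω)
    (h : ∀ μ : Ω → ℝ, MemLp μ 2 m → (∀ᵐ ω ∂m, 0 ≤ μ ω) →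
      ∫ ω, (μ ω - l ω) * f ω ∂m ≤ ∫ ω, (μ ω - l ω) * g ω ∂m) :
    (∀ᵐ ω ∂m, f ω ≤ g ω) ∧ ∫ ω, l ω * f ω ∂m = ∫ ω, l ω * g ω ∂m := by
  have hfg : ∀ᵐ ω ∂m, f ω ≤ g ω :=
    ae_le_of_forall_integral_mul_le hf hg fun ψ hψ hψ0 => by
      simpa using h (fun ω => l ω + ψ ω) (hl.add hψ)
        (by filter_upwards [hl0, hψ0] with ω h₁ h₂ using add_nonneg h₁ h₂)
  refine ⟨hfg, le_antisymm (integral_mul_le_integral_mul_of_nonneg hl hf hg hl0 hfg) ?_⟩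
  simpa [integral_neg] using h 0 MemLp.zero (ae_of_all _ fun _ => le_rfl)

lemma integral_mul_eq_integral_mul_abs_of_forall_abs_le {l f F : Ω → ℝ} (hl : MemLp l 2 m)
    (hf : MemLp f 2 m) (hF : MemLp F 2 m) (hlF : ∀ᵐ ω ∂m, |l ω| ≤ F ω)
    (h : ∀ μ : Ω → ℝ, MemLp μ 2 m → (∀ᵐ ω ∂m, |μ ω| ≤ F ω) →
      ∫ ω, (μ ω - l ω) * f ω ∂m ≤ 0) :
    ∫ ω, l ω * f ω ∂m = ∫ ω, F ω * |f ω| ∂m := by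
  refine le_antisymm (integral_mul_le_integral_mul_abs hl hf hF hlF) ?_
  have hf_abs : MemLp (fun ω => |f ω|) 2 m := hf.abs
  set s : Ω → ℝ := fun ω => F ω * SignType.sign (f ω)
  have hs_le : ∀ ω, |s ω| ≤ |F ω| := fun ω => by
    simpa [s, abs_mul] using
      mul_le_mul_of_nonneg_left (abs_coe_sign_le_one (f ω)) (abs_nonneg (F ω))
  have hs : MemLp s 2 m := hF.of_le
    (hF.1.mul (measurable_coe_sign_real.comp_aemeasurable hf.1.aemeasurable).aestronglyMeasurable)
    (ae_of_all _ hs_le)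
  have hsF : ∀ᵐ ω ∂m, |s ω| ≤ F ω := by
    filter_upwards [hlF] with ω hω
    exact (hs_le ω).trans_eq (abs_of_nonneg ((abs_nonneg _).trans hω))
  have hsf : ∀ ω, (s ω - l ω) * f ω = F ω * |f ω| - l ω * f ω := fun ω => by
    simp only [s, sub_mul, mul_assoc, sign_mul_self]
  have hint := h s hs hsF
  simp_rw [hsf] at hint
  rwa [integral_sub (integrable_mul_of_memLp_two hF hf_abs) (integrable_mul_of_memLp_two hl hf),
    sub_nonpos] at hint

end

theorem mixed_solves_variational_inequality_general
    {Ω : Type*} [MeasurableSpace Ω] (m : Measure Ω)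
    {V : Type*} [NormedAddCommGroup V] [InnerProductSpace ℝ V]
    (τ : V →ₗ[ℝ] Ω → ℝ × ℝ) (hτ : ∀ v : V, MemLp (τ v) 2 m)
    (a : V →ₗ[ℝ] V →ₗ[ℝ] ℝ) (L : V →ₗ[ℝ] ℝ)
    (g F : Ω → ℝ) (hg : MemLp g 2 m) (hF : MemLp F 2 m)
    (u : V) (l : Ω → ℝ × ℝ)
    (hl : MemLp l 2 m) (hln : ∀ᵐ ω ∂m, 0 ≤ (l ω).1)
    (hlt : ∀ᵐ ω ∂m, |(l ω).2| ≤ F ω)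
    (heq : ∀ v : V,
      a u v + (∫ ω, ((l ω).1 * (τ v ω).1 + (l ω).2 * (τ v ω).2) ∂m) = L v)
    (hineq : ∀ μ : Ω → ℝ × ℝ, MemLp μ 2 m →
      (∀ᵐ ω ∂m, 0 ≤ (μ ω).1) → (∀ᵐ ω ∂m, |(μ ω).2| ≤ F ω) →
      ∫ ω, (((μ ω).1 - (l ω).1) * (τ u ω).1 + ((μ ω).2 - (l ω).2) * (τ u ω).2) ∂m
        ≤ ∫ ω, g ω * ((μ ω).1 - (l ω).1) ∂m) :
    (∀ᵐ ω ∂m, (τ u ω).1 ≤ g ω) ∧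
    (∀ v : V, (∀ᵐ ω ∂m, (τ v ω).1 ≤ g ω) →
      a u (v - u) + (∫ ω, F ω * |(τ v ω).2| ∂m) - (∫ ω, F ω * |(τ u ω).2| ∂m)
        ≥ L (v - u)) := by
  obtain ⟨hK, hcompl⟩ := ae_le_and_integral_mul_eq_of_forall_nonneg hl.fst (hτ u).fst hg hln
    fun μ hμ hμ0 => by
      simpa [mul_comm (g _)] using
        hineq (fun ω => (μ ω, (l ω).2)) (MemLp.of_fst_snd ⟨hμ, hl.snd⟩) hμ0 hlt
  have hfric := integral_mul_eq_integral_mul_abs_of_forall_abs_le hl.snd (hτ u).snd hF hlt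
    fun μ hμ hμF => by
      simpa using hineq (fun ω => ((l ω).1, μ ω)) (MemLp.of_fst_snd ⟨hl.fst, hμ⟩) hln hμF
  refine ⟨hK, fun v hv => ?_⟩
  have hnormal := integral_mul_le_integral_mul_of_nonneg hl.fst (hτ v).fst hg hln hv
  have htang := integral_mul_le_integral_mul_abs hl.snd (hτ v).snd hF hlt
  have hsplit (w : V) : ∫ ω, ((l ω).1 * (τ w ω).1 + (l ω).2 * (τ w ω).2) ∂m
      = ∫ ω, (l ω).1 * (τ w ω).1 ∂m + ∫ ω, (l ω).2 * (τ w ω).2 ∂m :=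
    integral_add (integrable_mul_of_memLp_two hl.fst (hτ w).fst)
      (integrable_mul_of_memLp_two hl.snd (hτ w).snd)
  rw [map_sub, map_sub]
  linarith [heq u, heq v, hsplit u, hsplit v]

/-- Every solution of the mixed formulation solves the variational inequality: if
`(u, λ) ∈ V × M_pt` satisfies the mixed variational equation and the multiplier
constraint, then `u` belongs to the admissible set `K = {v : (τv)ₙ ≤ g a.e.}` and
satisfies `a(u, v − u) + j(v) − j(u) ≥ L(v − u)` for all `v ∈ K`, where
`j(v) = ∫ F |(τv)ₜ| dm`. -/
theorem mixed_solves_variational_inequality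
    {Ω : Type*} [MeasurableSpace Ω] (m : Measure Ω) [SigmaFinite m]
    {V : Type*} [NormedAddCommGroup V] [InnerProductSpace ℝ V]
    (τ : V →ₗ[ℝ] Ω → ℝ × ℝ) (hτ : ∀ v : V, MemLp (τ v) 2 m)
    (a : V →ₗ[ℝ] V →ₗ[ℝ] ℝ) (L : V →ₗ[ℝ] ℝ)
    (g F : Ω → ℝ) (hg : MemLp g 2 m) (hF : MemLp F 2 m)
    (hFpos : ∀ᵐ ω ∂m, 0 < F ω)
    (u : V) (l : Ω → ℝ × ℝ)
    (hl : MemLp l 2 m) (hln : ∀ᵐ ω ∂m, 0 ≤ (l ω).1)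
    (hlt : ∀ᵐ ω ∂m, |(l ω).2| ≤ F ω)
    (heq : ∀ v : V,
      a u v + (∫ ω, ((l ω).1 * (τ v ω).1 + (l ω).2 * (τ v ω).2) ∂m) = L v)
    (hineq : ∀ μ : Ω → ℝ × ℝ, MemLp μ 2 m →
      (∀ᵐ ω ∂m, 0 ≤ (μ ω).1) → (∀ᵐ ω ∂m, |(μ ω).2| ≤ F ω) →
      ∫ ω, (((μ ω).1 - (l ω).1) * (τ u ω).1 + ((μ ω).2 - (l ω).2) * (τ u ω).2) ∂m
        ≤ ∫ ω, g ω * ((μ ω).1 - (l ω).1) ∂m) :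
    (∀ᵐ ω ∂m, (τ u ω).1 ≤ g ω) ∧
    (∀ v : V, (∀ᵐ ω ∂m, (τ v ω).1 ≤ g ω) →
      a u (v - u) + (∫ ω, F ω * |(τ v ω).2| ∂m) - (∫ ω, F ω * |(τ u ω).2| ∂m)
        ≥ L (v - u)) :=
  mixed_solves_variational_inequality_general m τ hτ a L g F hg hF u l hl hln hlt heq hineq
end
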